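/- The efficient influence function has mean zero (key property underlying Proposition 5): Under the overlap condition and the conditional identification conditions (a), (b), (c) with comparison event C = {G = ∞}, and given 𝒳-measurable integrable outcome functions μ^{s}_{g}, μ^{s'}_{g}, μ^{s}_{c}, μ^{s'}_{c} satisfying, almost surely, μ^{s}_{g}·π_{g,s} = E[1_{G=g}1_{S_s}·ΔY | 𝒳], μ^{s'}_{g}·π_{g,s'} = E[1_{G=g}1_{S_{s'}}·ΔY | 𝒳], μ^{s}_{c}·π_{c,s} = E[1_C 1_{S_s}·ΔY | 𝒳], and μ^{s'}_{c}·π_{c,s'} = E[1_C 1_{S_{s'}}·ΔY | 𝒳], the efficient influence function η := (1_{G=g}1_{S_s}/p)·(ΔY − μ^{s}_{g}) − (1_{G=g}1_{S_{s'}}·π_{g,s}/(p·π_{g,s'}))·(ΔY − μ^{s'}_{g}) − (1_C 1_{S_s}·π_{g,s}/(p·π_{c,s}))·(ΔY − μ^{s}_{c}) + (1_C 1_{S_{s'}}·π_{g,s}/(p·π_{c,s'}))·(ΔY − μ^{s'}_{c}) + (1_{G=g}1_{S_s}/p)·(μ^{s}_{g} − μ^{s'}_{g} − CDATT(g,t))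 − (1_C 1_{S_s}·π_{g,s}/(p·π_{c,s}))·(μ^{s}_{c} − μ^{s'}_{c}) satisfies E[η] = 0, where ΔY = Y_t − Y_{g−1} is the observed change in outcomes. -/

import Mathlib

open MeasureTheory ProbabilityTheory
open scoped Classical

/-!
Multiplied by `p`, the influence function loses the outcome models `μg` and `μc`, and becomes an
inverse-propensity-weighted combination of residuals `1_E (ΔY - q)` with `𝒳`-measurable `q`.
Conditioning on `𝒳` turns each `1_E` into its propensity score, so the `q`'s cancel too and only
the combination of the `E[1_E ΔY | 𝒳]` is left. On each group `ΔY` is a treatment effect plus an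
untreated trend, and no subgroup selection (a) together with parallel trends (b) reduce that
combination to `E[1_{G=g, S_s} (τ_s - τ_{s'}) | 𝒳]`, where `τ_σ = Y_t(g; σ) - Y_t(∞; σ)`.
What remains, `1_{G=g, S_s} (τ_s - τ_{s'} - CDATT)`, has mean zero by the definition of CDATT.
-/

namespace MeasureTheory

variable {Ω : Type*} {m m0 : MeasurableSpace Ω} {μ : Measure Ω}

/-- Bundling integrability (off which `μ[f|m]` is the junk value `0`) makes this relation
compatible with sums and with `m`-measurable factors. -/
def HasCondExp (m : MeasurableSpace Ω) {m0 : MeasurableSpace Ω} (μ : Measure[m0] Ω) (f F : Ω → ℝ) :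
    Prop :=
  Integrable f μ ∧ μ[f|m] =ᵐ[μ] F

namespace HasCondExp

variable {f g F G w : Ω → ℝ}

theorem congr (h : HasCondExp m μ f F) (hF : F =ᵐ[μ] G) : HasCondExp m μ f G :=
  ⟨h.1, h.2.trans hF⟩

theorem add (hf : HasCondExp m μ f F) (hg : HasCondExp m μ g G) :
    HasCondExp m μ (f + g) (F + G) :=
  ⟨hf.1.add hg.1, (condExp_add hf.1 hg.1 m).trans (hf.2.add hg.2)⟩

theorem sub (hf : HasCondExp m μ f F) (hg : HasCondExp m μ g G) :
    HasCondExp m μ (f - g) (F - G) :=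
  ⟨hf.1.sub hg.1, (condExp_sub hf.1 hg.1 m).trans (hf.2.sub hg.2)⟩

theorem mul_left (hw : StronglyMeasurable[m] w) (hwf : Integrable (w * f) μ)
    (h : HasCondExp m μ f F) : HasCondExp m μ (w * f) (w * F) :=
  ⟨hwf, (condExp_mul_of_stronglyMeasurable_left hw hwf h.1).trans (.mul .rfl h.2)⟩

theorem mul_left_of_bdd (hm : m ≤ m0) (hw : StronglyMeasurable[m] w) {c : ℝ}
    (hc : ∀ᵐ ω ∂μ, ‖w ω‖ ≤ c) (h : HasCondExp m μ f F) : HasCondExp m μ (w * f) (w * F) :=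
  h.mul_left hw (h.1.bdd_mul (hw.mono hm).aestronglyMeasurable hc)

theorem integral_eq (hm : m ≤ m0) [SigmaFinite (μ.trim hm)] (h : HasCondExp m μ f F) :
    ∫ ω, f ω ∂μ = ∫ ω, F ω ∂μ :=
  (integral_condExp hm).symm.trans (integral_congr_ae h.2)

theorem integral_eq_integral (hm : m ≤ m0) [SigmaFinite (μ.trim hm)] (hf : HasCondExp m μ f F)
    (hg : HasCondExp m μ g G) (hFG : F =ᵐ[μ] G) : ∫ ω, f ω ∂μ = ∫ ω, g ω ∂μ :=
  ((hf.congr hFG).integral_eq hm).trans (hg.integral_eq hm).symm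

end HasCondExp

theorem hasCondExp_condExp {f : Ω → ℝ} (hf : Integrable f μ) : HasCondExp m μ f (μ[f|m]) :=
  ⟨hf, .rfl⟩

theorem ae_abs_condExp_indicator_one_le (E : Set Ω) :
    ∀ᵐ ω ∂μ, |μ[E.indicator (1 : Ω → ℝ)|m] ω| ≤ 1 :=
  ae_bdd_abs_condExp_of_ae_bdd_abs (.of_forall fun ω => by
    by_cases h : ω ∈ E <;> simp [h])

theorem Integrable.cond {f : Ω → ℝ} (hf : Integrable f μ) (s : Set Ω) : Integrable f μ[|s] := by
  by_cases hs : μ s = 0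
  · rw [cond_eq_zero_of_meas_eq_zero hs]
    exact integrable_zero_measure
  · exact hf.restrict.smul_measure (ENNReal.inv_ne_top.2 hs)

theorem integral_indicator_one_mul_sub_integral_cond [IsFiniteMeasure μ] {s : Set Ω}
    (hs : MeasurableSet s) {f : Ω → ℝ} (hf : Integrable f μ) :
    ∫ ω, s.indicator 1 ω * (f ω - ∫ x, f x ∂μ[|s]) ∂μ = 0 := by
  have hind : (fun ω => s.indicator 1 ω * (f ω - ∫ x, f x ∂μ[|s]))
      = s.indicator fun ω => f ω - ∫ x, f x ∂μ[|s] := by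
    ext ω
    by_cases h : ω ∈ s <;> simp [h]
  rw [hind, integral_indicator hs, integral_sub hf.integrableOn (integrable_const _),
    setIntegral_const, ProbabilityTheory.cond, integral_smul_measure, smul_eq_mul, smul_eq_mul,
    ENNReal.toReal_inv, ← measureReal_def]
  by_cases h : μ.real s = 0
  · simp [h, Measure.restrict_eq_zero.2 ((measureReal_eq_zero_iff).1 h)]
  · field_simp
    ring

theorem hasCondExp_indicator_mul_sub [IsFiniteMeasure μ] {E : Set Ω}
    (hE : MeasurableSet E) {f q πE : Ω → ℝ} (hf : Integrable f μ) (hq : StronglyMeasurable[m] q)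
    (hqi : Integrable q μ) (hπE : πE =ᵐ[μ] μ[E.indicator 1|m]) :
    HasCondExp m μ (fun ω => E.indicator 1 ω * (f ω - q ω))
      (fun ω => μ[E.indicator f|m] ω - q ω * πE ω) := by
  have hqE : q * E.indicator 1 = E.indicator q := by
    ext ω
    by_cases h : ω ∈ E <;> simp [h]
  have hπ : HasCondExp m μ (q * E.indicator 1) (q * πE) :=
    ((hasCondExp_condExp ((integrable_const 1).indicator hE)).congr hπE.symm).mul_left hq
      (hqE ▸ hqi.indicator hE)
  convert (hasCondExp_condExp (m := m) (hf.indicator hE)).sub hπ using 1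
  · ext ω
    by_cases h : ω ∈ E <;> simp [h]
  · rfl

theorem hasCondExp_div_mul_indicator_mul_sub (hm : m ≤ m0) [IsFiniteMeasure μ] {E : Set Ω}
    (hE : MeasurableSet E) {f q a πE : Ω → ℝ} (hf : Integrable f μ)
    (hq : StronglyMeasurable[m] q) (hqi : Integrable q μ) (ha : StronglyMeasurable[m] a)
    (ha1 : ∀ᵐ ω ∂μ, |a ω| ≤ 1) (hπ : StronglyMeasurable[m] πE)
    (hπE : πE =ᵐ[μ] μ[E.indicator 1|m]) {ε : ℝ} (hε : 0 < ε) (hπε : ∀ᵐ ω ∂μ, ε ≤ πE ω) :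
    HasCondExp m μ (fun ω => a ω / πE ω * (E.indicator 1 ω * (f ω - q ω)))
      (fun ω => a ω / πE ω * μ[E.indicator f|m] ω - q ω * a ω) := by
  have hw : StronglyMeasurable[m] fun ω => a ω / πE ω :=
    (ha.measurable.div hπ.measurable).stronglyMeasurable
  have hbdd : ∀ᵐ ω ∂μ, ‖a ω / πE ω‖ ≤ 1 / ε := by
    filter_upwards [ha1, hπε] with ω h1 h2
    rw [Real.norm_eq_abs, abs_div, abs_of_pos (hε.trans_le h2)]
    exact div_le_div₀ zero_le_one h1 hε h2
  refine ((hasCondExp_indicator_mul_sub hE hf hq hqi hπE).mul_left_of_bdd hm hw hbdd).congr ?_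
  filter_upwards [hπε] with ω h
  have : πE ω ≠ 0 := (hε.trans_le h).ne'
  simp only [Pi.mul_apply]
  field_simp

theorem hasCondExp_aipw (hm : m ≤ m0) [IsFiniteMeasure μ] {E₁ E₂ E₃ E₄ : Set Ω}
    (hE₁ : MeasurableSet E₁) (hE₂ : MeasurableSet E₂) (hE₃ : MeasurableSet E₃)
    (hE₄ : MeasurableSet E₄) {Y q₁ q₂ q₃ q₄ π₁ π₂ π₃ π₄ : Ω → ℝ} (hY : Integrable Y μ)
    (hq₁ : StronglyMeasurable[m] q₁) (hq₁i : Integrable q₁ μ)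
    (hq₂ : StronglyMeasurable[m] q₂) (hq₂i : Integrable q₂ μ)
    (hq₃ : StronglyMeasurable[m] q₃) (hq₃i : Integrable q₃ μ)
    (hq₄ : StronglyMeasurable[m] q₄) (hq₄i : Integrable q₄ μ)
    (hπ₁m : StronglyMeasurable[m] π₁) (hπ₁ : π₁ =ᵐ[μ] μ[E₁.indicator 1|m])
    (hπ₂m : StronglyMeasurable[m] π₂) (hπ₂ : π₂ =ᵐ[μ] μ[E₂.indicator 1|m])
    (hπ₃m : StronglyMeasurable[m] π₃) (hπ₃ : π₃ =ᵐ[μ] μ[E₃.indicator 1|m])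
    (hπ₄m : StronglyMeasurable[m] π₄) (hπ₄ : π₄ =ᵐ[μ] μ[E₄.indicator 1|m])
    {ε : ℝ} (hε : 0 < ε) (hπ₂ε : ∀ᵐ ω ∂μ, ε ≤ π₂ ω) (hπ₃ε : ∀ᵐ ω ∂μ, ε ≤ π₃ ω)
    (hπ₄ε : ∀ᵐ ω ∂μ, ε ≤ π₄ ω) :
    HasCondExp m μ
      (fun ω => E₁.indicator 1 ω * (Y ω - q₁ ω)
        - π₁ ω / π₂ ω * (E₂.indicator 1 ω * (Y ω - q₂ ω))
        - π₁ ω / π₃ ω * (E₃.indicator 1 ω * (Y ω - q₃ ω))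
        + π₁ ω / π₄ ω * (E₄.indicator 1 ω * (Y ω - q₄ ω)))
      (fun ω => μ[E₁.indicator Y|m] ω - π₁ ω / π₂ ω * μ[E₂.indicator Y|m] ω
        - π₁ ω / π₃ ω * μ[E₃.indicator Y|m] ω + π₁ ω / π₄ ω * μ[E₄.indicator Y|m] ω
        - (q₁ ω - q₂ ω - q₃ ω + q₄ ω) * π₁ ω) := by
  have hπ₁1 : ∀ᵐ ω ∂μ, |π₁ ω| ≤ 1 := by
    filter_upwards [hπ₁, ae_abs_condExp_indicator_one_le E₁] with ω h h1
    rwa [h]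
  refine ((((hasCondExp_indicator_mul_sub hE₁ hY hq₁ hq₁i hπ₁).sub
    (hasCondExp_div_mul_indicator_mul_sub hm hE₂ hY hq₂ hq₂i hπ₁m hπ₁1 hπ₂m hπ₂ hε hπ₂ε)).sub
    (hasCondExp_div_mul_indicator_mul_sub hm hE₃ hY hq₃ hq₃i hπ₁m hπ₁1 hπ₃m hπ₃ hε hπ₃ε)).add
    (hasCondExp_div_mul_indicator_mul_sub hm hE₄ hY hq₄ hq₄i hπ₁m hπ₁1 hπ₄m hπ₄ hε hπ₄ε)).congr
    (.of_forall fun ω => ?_)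
  simp only [Pi.add_apply, Pi.sub_apply]
  ring

theorem ae_eq_condExp_of_parallel_trends {E₁ E₂ E₃ E₄ : Set Ω} (hE₁ : MeasurableSet E₁)
    (hE₂ : MeasurableSet E₂) {Y τ τ' Δ Δ' π₁ π₂ π₃ π₄ : Ω → ℝ} (hτ : Integrable τ μ)
    (hτ' : Integrable τ' μ) (hΔ : Integrable Δ μ) (hΔ' : Integrable Δ' μ)
    (hY₁ : E₁.indicator Y = E₁.indicator τ + E₁.indicator Δ)
    (hY₂ : E₂.indicator Y = E₂.indicator τ' + E₂.indicator Δ')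
    (hY₃ : E₃.indicator Y = E₃.indicator Δ) (hY₄ : E₄.indicator Y = E₄.indicator Δ')
    (hsel : (fun ω => μ[E₁.indicator τ'|m] ω * π₂ ω) =ᵐ[μ]
      fun ω => μ[E₂.indicator τ'|m] ω * π₁ ω)
    (htr : (fun ω => μ[E₁.indicator Δ|m] ω * π₃ ω) =ᵐ[μ]
      fun ω => μ[E₃.indicator Δ|m] ω * π₁ ω)
    (htr' : (fun ω => μ[E₂.indicator Δ'|m] ω * π₄ ω) =ᵐ[μ]
      fun ω => μ[E₄.indicator Δ'|m] ω * π₂ ω)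
    (hπ₂ : ∀ᵐ ω ∂μ, π₂ ω ≠ 0) (hπ₃ : ∀ᵐ ω ∂μ, π₃ ω ≠ 0) (hπ₄ : ∀ᵐ ω ∂μ, π₄ ω ≠ 0) :
    (fun ω => μ[E₁.indicator Y|m] ω - π₁ ω / π₂ ω * μ[E₂.indicator Y|m] ω
        - π₁ ω / π₃ ω * μ[E₃.indicator Y|m] ω + π₁ ω / π₄ ω * μ[E₄.indicator Y|m] ω)
      =ᵐ[μ] μ[E₁.indicator (τ - τ')|m] := by
  have hsplit₁ := condExp_add (hτ.indicator hE₁) (hΔ.indicator hE₁) m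
  have hsplit₂ := condExp_add (hτ'.indicator hE₂) (hΔ'.indicator hE₂) m
  have hdiff := condExp_sub (hτ.indicator hE₁) (hτ'.indicator hE₁) m
  rw [← hY₁] at hsplit₁
  rw [← hY₂] at hsplit₂
  rw [← Set.indicator_sub'] at hdiff
  rw [hY₃, hY₄]
  filter_upwards [hsplit₁, hsplit₂, hdiff, hsel, htr, htr', hπ₂, hπ₃, hπ₄]
    with ω e₁ e₂ e₃ sel tr tr' h₂ h₃ h₄
  simp only [Pi.add_apply, Pi.sub_apply] at e₁ e₂ e₃ ⊢
  rw [e₁, e₂, e₃]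
  field_simp
  linear_combination π₃ ω * π₄ ω * sel + π₂ ω * π₄ ω * tr - π₁ ω * π₃ ω * tr'

end MeasureTheory

section PotentialOutcomes

variable {Ω : Type*} {G : Ω → ℕ∞} {Y Z : ℕ → ℕ∞ → Ω → ℝ} {Yobs : ℕ → Ω → ℝ} {S : Set Ω}

theorem indicator_observed_change_of_cohort
    (hYobs : ∀ τ ω, Yobs τ ω = if G ω ≤ (τ : ℕ∞) then Y τ (G ω) ω else Y τ ⊤ ω)
    (hYZ : ∀ τ γ, Set.EqOn (Y τ γ) (Z τ γ) S) {g t : ℕ} (hg1 : 1 ≤ g) (hgt : g ≤ t) :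
    ({ω | G ω = g} ∩ S).indicator (fun ω => Yobs t ω - Yobs (g - 1) ω)
      = ({ω | G ω = g} ∩ S).indicator (fun ω => Z t g ω - Z t ⊤ ω)
        + ({ω | G ω = g} ∩ S).indicator (fun ω => Z t ⊤ ω - Z (g - 1) ⊤ ω) := by
  rw [← Set.indicator_add']
  refine Set.indicator_congr fun ω ⟨(hG : G ω = g), hS⟩ => ?_
  have hpre : ¬ (g : ℕ∞) ≤ ((g - 1 : ℕ) : ℕ∞) := by exact_mod_cast (by omega : ¬ g ≤ g - 1)
  simp only [hYobs, hG, Nat.cast_le.2 hgt, hpre, if_true, if_false, hYZ _ _ hS, Pi.add_apply]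
  ring

theorem indicator_observed_change_of_never_treated
    (hYobs : ∀ τ ω, Yobs τ ω = if G ω ≤ (τ : ℕ∞) then Y τ (G ω) ω else Y τ ⊤ ω)
    (hYZ : ∀ τ γ, Set.EqOn (Y τ γ) (Z τ γ) S) (t s : ℕ) :
    ({ω | G ω = ⊤} ∩ S).indicator (fun ω => Yobs t ω - Yobs s ω)
      = ({ω | G ω = ⊤} ∩ S).indicator (fun ω => Z t ⊤ ω - Z s ⊤ ω) := by
  refine Set.indicator_congr fun ω ⟨(hG : G ω = ⊤), hS⟩ => ?_
  simp [hYobs, hG, hYZ _ _ hS]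

end PotentialOutcomes

theorem mul_eif_eq {p y a b c d π₁ π₂ π₃ π₄ m₁ m₂ m₃ m₄ k : ℝ} (hp : p ≠ 0) :
    p * (a / p * (y - m₁) - b * π₁ / (p * π₂) * (y - m₂) - c * π₁ / (p * π₃) * (y - m₃)
      + d * π₁ / (p * π₄) * (y - m₄) + a / p * (m₁ - m₂ - k) - c * π₁ / (p * π₃) * (m₃ - m₄))
    = a * (y - (m₂ + k)) - π₁ / π₂ * (b * (y - m₂)) - π₁ / π₃ * (c * (y - m₄))
      + π₁ / π₄ * (d * (y - m₄)) := by
  field_simp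
  ring

theorem efficient_influence_function_mean_zero_general
    {Ω : Type*} [m0 : MeasurableSpace Ω] (μ : Measure Ω) [IsProbabilityMeasure μ]
    (G : Ω → ℕ∞) (hGmeas : Measurable G)
    (Ss : Set Ω) (hSs : MeasurableSet Ss)
    (Ys Ys' Y : ℕ → ℕ∞ → Ω → ℝ)
    (hY : ∀ τ γ ω, Y τ γ ω = if ω ∈ Ss then Ys τ γ ω else Ys' τ γ ω)
    (hIntYs : ∀ τ γ, Integrable (Ys τ γ) μ)
    (hIntYs' : ∀ τ γ, Integrable (Ys' τ γ) μ)
    (Yobs : ℕ → Ω → ℝ)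
    (hYobs : ∀ τ ω, Yobs τ ω = if G ω ≤ (τ : ℕ∞) then Y τ (G ω) ω else Y τ ⊤ ω)
    (hIntYobs : ∀ τ, Integrable (Yobs τ) μ)
    (g t : ℕ) (hg1 : 1 ≤ g) (hgt : g ≤ t)
    -- covariate σ-algebra and comparison event
    (𝒳 : MeasurableSpace Ω) (h𝒳 : 𝒳 ≤ m0)
    (C : Set Ω) (hC : C = {ω | G ω = ⊤})
    -- group-subgroup events
    (Egs Egs' Ecs Ecs' : Set Ω)
    (hEgs : Egs = {ω | G ω = (g : ℕ∞)} ∩ Ss)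
    (hEgs' : Egs' = {ω | G ω = (g : ℕ∞)} ∩ Ssᶜ)
    (hEcs : Ecs = C ∩ Ss) (hEcs' : Ecs' = C ∩ Ssᶜ)
    -- propensity scores: versions of the conditional expectations of indicators
    (πgs πgs' πcs πcs' : Ω → ℝ)
    (hπgs_meas : StronglyMeasurable[𝒳] πgs)
    (hπgs : πgs =ᵐ[μ] μ[Egs.indicator (fun _ => (1 : ℝ)) | 𝒳])
    (hπgs'_meas : StronglyMeasurable[𝒳] πgs')
    (hπgs' : πgs' =ᵐ[μ] μ[Egs'.indicator (fun _ => (1 : ℝ)) | 𝒳])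
    (hπcs_meas : StronglyMeasurable[𝒳] πcs)
    (hπcs : πcs =ᵐ[μ] μ[Ecs.indicator (fun _ => (1 : ℝ)) | 𝒳])
    (hπcs'_meas : StronglyMeasurable[𝒳] πcs')
    (hπcs' : πcs' =ᵐ[μ] μ[Ecs'.indicator (fun _ => (1 : ℝ)) | 𝒳])
    -- overlap (Assumption 9)
    (ε : ℝ) (hε : 0 < ε)
    (p : ℝ) (hpε : ε < p)
    (hπgs'_bd : ∀ᵐ ω ∂μ, ε ≤ πgs' ω)
    (hπcs_bd : ∀ᵐ ω ∂μ, ε ≤ πcs ω)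
    (hπcs'_bd : ∀ᵐ ω ∂μ, ε ≤ πcs' ω)
    -- observed change and counterfactual untreated changes
    (ΔY Δs Δs' : Ω → ℝ)
    (hΔY : ΔY = fun ω => Yobs t ω - Yobs (g - 1) ω)
    (hΔs : Δs = fun ω => Ys t ⊤ ω - Ys (g - 1) ⊤ ω)
    (hΔs' : Δs' = fun ω => Ys' t ⊤ ω - Ys' (g - 1) ⊤ ω)
    -- (a) conditional no subgroup selection
    (ha : (fun ω => (μ[Egs.indicator (fun ω' => Ys' t (g : ℕ∞) ω' - Ys' t ⊤ ω') | 𝒳]) ω * πgs' ω)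
        =ᵐ[μ] fun ω => (μ[Egs'.indicator (fun ω' => Ys' t (g : ℕ∞) ω' - Ys' t ⊤ ω') | 𝒳]) ω * πgs ω)
    -- (b) conditional parallel trends within each subgroup
    (hb_s : (fun ω => (μ[Egs.indicator Δs | 𝒳]) ω * πcs ω)
        =ᵐ[μ] fun ω => (μ[Ecs.indicator Δs | 𝒳]) ω * πgs ω)
    (hb_s' : (fun ω => (μ[Egs'.indicator Δs' | 𝒳]) ω * πcs' ω)
        =ᵐ[μ] fun ω => (μ[Ecs'.indicator Δs' | 𝒳]) ω * πgs' ω)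
    -- outcome models (𝒳-measurable, integrable)
    (μg μg' μc μc' : Ω → ℝ)
    (hμg'_meas : StronglyMeasurable[𝒳] μg') (hμg'_int : Integrable μg' μ)
    (hμc'_meas : StronglyMeasurable[𝒳] μc') (hμc'_int : Integrable μc' μ)
    -- CDATT(g,t)
    (CD : ℝ)
    (hCD : CD = (∫ ω, (Ys t (g : ℕ∞) ω - Ys t ⊤ ω) ∂(μ[|Egs]))
        - (∫ ω, (Ys' t (g : ℕ∞) ω - Ys' t ⊤ ω) ∂(μ[|Egs])))
    -- the efficient influence function
    (η : Ω → ℝ)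
    (hη : η = fun ω =>
        (Egs.indicator (fun _ => (1 : ℝ)) ω / p) * (ΔY ω - μg ω)
        - (Egs'.indicator (fun _ => (1 : ℝ)) ω * πgs ω / (p * πgs' ω)) * (ΔY ω - μg' ω)
        - (Ecs.indicator (fun _ => (1 : ℝ)) ω * πgs ω / (p * πcs ω)) * (ΔY ω - μc ω)
        + (Ecs'.indicator (fun _ => (1 : ℝ)) ω * πgs ω / (p * πcs' ω)) * (ΔY ω - μc' ω)
        + (Egs.indicator (fun _ => (1 : ℝ)) ω / p) * (μg ω - μg' ω - CD)
        - (Ecs.indicator (fun _ => (1 : ℝ)) ω * πgs ω / (p * πcs ω)) * (μc ω - μc' ω)) :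
    -- the efficient influence function has mean zero
    (∫ ω, η ω ∂μ) = 0 := by
  have hp0 : p ≠ 0 := (hε.trans hpε).ne'
  have hcohort (γ : ℕ∞) : MeasurableSet[m0] {ω | G ω = γ} := hGmeas (measurableSet_singleton γ)
  have hYs (τ : ℕ) (γ : ℕ∞) : Set.EqOn (Y τ γ) (Ys τ γ) Ss := fun ω h => by simp [hY, h]
  have hYs' (τ : ℕ) (γ : ℕ∞) : Set.EqOn (Y τ γ) (Ys' τ γ) Ssᶜ :=
    fun ω h => by simp [hY, show ω ∉ Ss from h]
  have hτ : Integrable (fun ω => Ys t g ω - Ys t ⊤ ω) μ := (hIntYs t g).sub (hIntYs t ⊤)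
  have hτ' : Integrable (fun ω => Ys' t g ω - Ys' t ⊤ ω) μ := (hIntYs' t g).sub (hIntYs' t ⊤)
  have hΔYi : Integrable ΔY μ := hΔY ▸ (hIntYobs t).sub (hIntYobs (g - 1))
  subst hC hEgs hEgs' hEcs hEcs' hη
  have hnum := hasCondExp_aipw h𝒳 ((hcohort g).inter hSs) ((hcohort g).inter hSs.compl)
    ((hcohort ⊤).inter hSs) ((hcohort ⊤).inter hSs.compl) hΔYi (q₁ := fun ω => μg' ω + CD)
    (hμg'_meas.add stronglyMeasurable_const) (hμg'_int.add (integrable_const CD))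
    hμg'_meas hμg'_int hμc'_meas hμc'_int hμc'_meas hμc'_int hπgs_meas hπgs hπgs'_meas hπgs'
    hπcs_meas hπcs hπcs'_meas hπcs' hε hπgs'_bd hπcs_bd hπcs'_bd
  have hid := ae_eq_condExp_of_parallel_trends (Y := ΔY) ((hcohort g).inter hSs)
    ((hcohort g).inter hSs.compl) hτ hτ' (hΔs ▸ (hIntYs t ⊤).sub (hIntYs (g - 1) ⊤))
    (hΔs' ▸ (hIntYs' t ⊤).sub (hIntYs' (g - 1) ⊤))
    (by subst hΔY hΔs; exact indicator_observed_change_of_cohort hYobs hYs hg1 hgt)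
    (by subst hΔY hΔs'; exact indicator_observed_change_of_cohort hYobs hYs' hg1 hgt)
    (by subst hΔY hΔs; exact indicator_observed_change_of_never_treated hYobs hYs t (g - 1))
    (by subst hΔY hΔs'; exact indicator_observed_change_of_never_treated hYobs hYs' t (g - 1))
    ha hb_s hb_s' (hπgs'_bd.mono fun ω h => (hε.trans_le h).ne')
    (hπcs_bd.mono fun ω h => (hε.trans_le h).ne') (hπcs'_bd.mono fun ω h => (hε.trans_le h).ne')
  have hcenter := hasCondExp_indicator_mul_sub ((hcohort g).inter hSs) (hτ.sub hτ')
    stronglyMeasurable_const (integrable_const CD) hπgs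
  have hmean := hnum.integral_eq_integral h𝒳 hcenter (hid.mono fun ω h => by linear_combination h)
  refine (mul_eq_zero.1 ?_).resolve_left hp0
  rw [← integral_const_mul]
  refine (integral_congr_ae (.of_forall fun ω => mul_eif_eq hp0)).trans (hmean.trans ?_)
  rw [hCD, ← integral_sub (hτ.cond _) (hτ'.cond _)]
  exact integral_indicator_one_mul_sub_integral_cond ((hcohort g).inter hSs) (hτ.sub hτ')

/-- The efficient influence function has mean zero (key property underlying
Proposition 5): with the never-treated comparison group `C = {G = ∞}` and
correctly specified outcome models, `E[η] = 0`. -/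
theorem efficient_influence_function_mean_zero
    {Ω : Type*} [m0 : MeasurableSpace Ω] (μ : Measure Ω) [IsProbabilityMeasure μ]
    (T : ℕ) (hT : 1 ≤ T)
    (G : Ω → ℕ∞) (hGmeas : Measurable G)
    (hGrange : ∀ ω, G ω = ⊤ ∨ (1 ≤ G ω ∧ G ω ≤ (T : ℕ∞)))
    (Ss : Set Ω) (hSs : MeasurableSet Ss)
    (Ys Ys' Y : ℕ → ℕ∞ → Ω → ℝ)
    (hY : ∀ τ γ ω, Y τ γ ω = if ω ∈ Ss then Ys τ γ ω else Ys' τ γ ω)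
    (hIntYs : ∀ τ γ, Integrable (Ys τ γ) μ)
    (hIntYs' : ∀ τ γ, Integrable (Ys' τ γ) μ)
    (Yobs : ℕ → Ω → ℝ)
    (hYobs : ∀ τ ω, Yobs τ ω = if G ω ≤ (τ : ℕ∞) then Y τ (G ω) ω else Y τ ⊤ ω)
    (hIntYobs : ∀ τ, Integrable (Yobs τ) μ)
    (g t : ℕ) (hg1 : 1 ≤ g) (hgt : g ≤ t) (htT : t ≤ T)
    -- covariate σ-algebra and comparison event
    (𝒳 : MeasurableSpace Ω) (h𝒳 : 𝒳 ≤ m0)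
    (C : Set Ω) (hC : C = {ω | G ω = ⊤})
    -- group-subgroup events
    (Egs Egs' Ecs Ecs' : Set Ω)
    (hEgs : Egs = {ω | G ω = (g : ℕ∞)} ∩ Ss)
    (hEgs' : Egs' = {ω | G ω = (g : ℕ∞)} ∩ Ssᶜ)
    (hEcs : Ecs = C ∩ Ss) (hEcs' : Ecs' = C ∩ Ssᶜ)
    -- propensity scores: versions of the conditional expectations of indicators
    (πgs πgs' πcs πcs' : Ω → ℝ)
    (hπgs_meas : StronglyMeasurable[𝒳] πgs)
    (hπgs : πgs =ᵐ[μ] μ[Egs.indicator (fun _ => (1 : ℝ)) | 𝒳])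
    (hπgs'_meas : StronglyMeasurable[𝒳] πgs')
    (hπgs' : πgs' =ᵐ[μ] μ[Egs'.indicator (fun _ => (1 : ℝ)) | 𝒳])
    (hπcs_meas : StronglyMeasurable[𝒳] πcs)
    (hπcs : πcs =ᵐ[μ] μ[Ecs.indicator (fun _ => (1 : ℝ)) | 𝒳])
    (hπcs'_meas : StronglyMeasurable[𝒳] πcs')
    (hπcs' : πcs' =ᵐ[μ] μ[Ecs'.indicator (fun _ => (1 : ℝ)) | 𝒳])
    -- overlap (Assumption 9)
    (ε : ℝ) (hε : 0 < ε)
    (p : ℝ) (hp : p = (μ Egs).toReal) (hpε : ε < p)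
    (hπgs'_bd : ∀ᵐ ω ∂μ, ε ≤ πgs' ω)
    (hπcs_bd : ∀ᵐ ω ∂μ, ε ≤ πcs ω)
    (hπcs'_bd : ∀ᵐ ω ∂μ, ε ≤ πcs' ω)
    -- observed change and counterfactual untreated changes
    (ΔY Δs Δs' : Ω → ℝ)
    (hΔY : ΔY = fun ω => Yobs t ω - Yobs (g - 1) ω)
    (hΔs : Δs = fun ω => Ys t ⊤ ω - Ys (g - 1) ⊤ ω)
    (hΔs' : Δs' = fun ω => Ys' t ⊤ ω - Ys' (g - 1) ⊤ ω)
    -- (a) conditional no subgroup selection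
    (ha : (fun ω => (μ[Egs.indicator (fun ω' => Ys' t (g : ℕ∞) ω' - Ys' t ⊤ ω') | 𝒳]) ω * πgs' ω)
        =ᵐ[μ] fun ω => (μ[Egs'.indicator (fun ω' => Ys' t (g : ℕ∞) ω' - Ys' t ⊤ ω') | 𝒳]) ω * πgs ω)
    -- (b) conditional parallel trends within each subgroup
    (hb_s : (fun ω => (μ[Egs.indicator Δs | 𝒳]) ω * πcs ω)
        =ᵐ[μ] fun ω => (μ[Ecs.indicator Δs | 𝒳]) ω * πgs ω)
    (hb_s' : (fun ω => (μ[Egs'.indicator Δs' | 𝒳]) ω * πcs' ω)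
        =ᵐ[μ] fun ω => (μ[Ecs'.indicator Δs' | 𝒳]) ω * πgs' ω)
    -- (c) conditional parallel gaps across subgroups for the s'-counterfactual change
    (hc_g : (fun ω => (μ[Egs.indicator Δs' | 𝒳]) ω * πgs' ω)
        =ᵐ[μ] fun ω => (μ[Egs'.indicator Δs' | 𝒳]) ω * πgs ω)
    (hc_c : (fun ω => (μ[Ecs.indicator Δs' | 𝒳]) ω * πcs' ω)
        =ᵐ[μ] fun ω => (μ[Ecs'.indicator Δs' | 𝒳]) ω * πcs ω)
    -- outcome models (𝒳-measurable, integrable)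
    (μg μg' μc μc' : Ω → ℝ)
    (hμg_meas : StronglyMeasurable[𝒳] μg) (hμg_int : Integrable μg μ)
    (hμg'_meas : StronglyMeasurable[𝒳] μg') (hμg'_int : Integrable μg' μ)
    (hμc_meas : StronglyMeasurable[𝒳] μc) (hμc_int : Integrable μc μ)
    (hμc'_meas : StronglyMeasurable[𝒳] μc') (hμc'_int : Integrable μc' μ)
    (hμg : (fun ω => μg ω * πgs ω) =ᵐ[μ] μ[Egs.indicator ΔY | 𝒳])
    (hμg' : (fun ω => μg' ω * πgs' ω) =ᵐ[μ] μ[Egs'.indicator ΔY | 𝒳])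
    (hμc : (fun ω => μc ω * πcs ω) =ᵐ[μ] μ[Ecs.indicator ΔY | 𝒳])
    (hμc' : (fun ω => μc' ω * πcs' ω) =ᵐ[μ] μ[Ecs'.indicator ΔY | 𝒳])
    -- CDATT(g,t)
    (CD : ℝ)
    (hCD : CD = (∫ ω, (Ys t (g : ℕ∞) ω - Ys t ⊤ ω) ∂(μ[|Egs]))
        - (∫ ω, (Ys' t (g : ℕ∞) ω - Ys' t ⊤ ω) ∂(μ[|Egs])))
    -- the efficient influence function
    (η : Ω → ℝ)
    (hη : η = fun ω =>
        (Egs.indicator (fun _ => (1 : ℝ)) ω / p) * (ΔY ω - μg ω)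
        - (Egs'.indicator (fun _ => (1 : ℝ)) ω * πgs ω / (p * πgs' ω)) * (ΔY ω - μg' ω)
        - (Ecs.indicator (fun _ => (1 : ℝ)) ω * πgs ω / (p * πcs ω)) * (ΔY ω - μc ω)
        + (Ecs'.indicator (fun _ => (1 : ℝ)) ω * πgs ω / (p * πcs' ω)) * (ΔY ω - μc' ω)
        + (Egs.indicator (fun _ => (1 : ℝ)) ω / p) * (μg ω - μg' ω - CD)
        - (Ecs.indicator (fun _ => (1 : ℝ)) ω * πgs ω / (p * πcs ω)) * (μc ω - μc' ω)) :
    -- the efficient influence function has mean zero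
    (∫ ω, η ω ∂μ) = 0 :=
  efficient_influence_function_mean_zero_general (m0 := m0) μ G hGmeas Ss hSs Ys Ys' Y hY hIntYs
    hIntYs' Yobs hYobs hIntYobs g t hg1 hgt 𝒳 h𝒳 C hC Egs Egs' Ecs Ecs' hEgs hEgs' hEcs hEcs' πgs
    πgs' πcs πcs' hπgs_meas hπgs hπgs'_meas hπgs' hπcs_meas hπcs hπcs'_meas hπcs' ε hε p hpε
    hπgs'_bd hπcs_bd hπcs'_bd ΔY Δs Δs' hΔY hΔs hΔs' ha hb_s hb_s' μg μg' μc μc' hμg'_meas hμg'_int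
    hμc'_meas hμc'_int CD hCD η hη
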